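/- arXiv:1901.10783 — 2 statements merged into one kernel-verified Lean document; each statement's English description precedes it below -/
import Mathlib

section
/- Let m ≥ 3, ε > 0, ρ > 0, p = 2m/(m−2), and u_ε(x) = (ε/(ε²+|x|²))^{(m−2)/2} on ℝ^m. Then ∫_{B(ρ)} |∇u_ε|² dx < m(m−2) ∫_{B(ρ)} u_ε^p dx. -/
/-!
In polar coordinates both sides become integrals over `(0, ρ)`: with `D = ε² + r²` one has
`|∇u_ε|² = (m-2)² ε^(m-2) r² / D^m` and `u_ε^p = ε^m / D^m`. The difference of the radial
integrands, `r^(m-1) (m(m-2) u_ε^p - |∇u_ε|²)`, is `(m-2) ε^(m-2)` times the derivative of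
`r^m / D^(m-1)`, so it integrates to the boundary term `(m-2) ε^(m-2) ρ^m / (ε² + ρ²)^(m-1) > 0`.
This is the radial form of testing `Δu_ε = -m(m-2) u_ε^(p-1)` against `u_ε` on the ball.
-/

open MeasureTheory Set Metric

theorem setIntegral_ball_fun_norm_addHaar {E F : Type*} [NormedAddCommGroup E] [NormedSpace ℝ E]
    [Nontrivial E] [FiniteDimensional ℝ E] [MeasurableSpace E] [BorelSpace E] (μ : Measure E)
    [μ.IsAddHaarMeasure] [NormedAddCommGroup F] [NormedSpace ℝ F] (f : ℝ → F) {ρ : ℝ}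
    (hρ : 0 ≤ ρ) :
    ∫ x in ball (0 : E) ρ, f ‖x‖ ∂μ =
      Module.finrank ℝ E • μ.real (ball 0 1) •
        ∫ r in (0 : ℝ)..ρ, r ^ (Module.finrank ℝ E - 1) • f r := by
  have hind : ∀ x : E, (ball (0 : E) ρ).indicator (fun x => f ‖x‖) x = (Iio ρ).indicator f ‖x‖ :=
    fun x => by simp [indicator]
  have hsmul : ∀ r : ℝ, r ^ (Module.finrank ℝ E - 1) • (Iio ρ).indicator f r =
      (Iio ρ).indicator (fun r => r ^ (Module.finrank ℝ E - 1) • f r) r :=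
    fun r => by by_cases hr : r < ρ <;> simp [indicator, hr]
  rw [← integral_indicator measurableSet_ball, funext hind, integral_fun_norm_addHaar,
    funext hsmul, integral_indicator measurableSet_Iio, Measure.restrict_restrict measurableSet_Iio,
    Iio_inter_Ioi, intervalIntegral.integral_of_le hρ, integral_Ioc_eq_integral_Ioo]

theorem hasDerivAt_pow_div_add_sq_pow_pred {m : ℕ} (hm : 1 ≤ m) {c : ℝ} (hc : 0 < c) (r : ℝ) :
    HasDerivAt (fun r : ℝ => r ^ m / (c + r ^ 2) ^ (m - 1))
      ((m * c * r ^ (m - 1) - ((m : ℝ) - 2) * r ^ (m + 1)) / (c + r ^ 2) ^ m) r := by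
  obtain ⟨k, rfl⟩ : ∃ k, m = k + 1 := ⟨m - 1, by omega⟩
  have hD : c + r ^ 2 ≠ 0 := by positivity
  have hquad : HasDerivAt (fun r : ℝ => c + r ^ 2) (2 * r) r := by
    simpa using (hasDerivAt_pow 2 r).const_add c
  rw [Nat.add_sub_cancel]
  refine ((hasDerivAt_pow (k + 1) r).div (hquad.pow k) (pow_ne_zero k hD)).congr_deriv ?_
  simp only [Pi.pow_apply]
  rcases k with _ | k
  · field_simp
    ring
  · simp only [Nat.add_sub_cancel]
    push_cast
    field_simp
    ring

theorem integral_radial_bubble_energy_lt {m : ℕ} (hm : 3 ≤ m) {ε : ℝ} (hε : 0 < ε) {ρ : ℝ}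
    (hρ : 0 < ρ) :
    ∫ r in (0 : ℝ)..ρ,
        r ^ (m - 1) * (((m : ℝ) - 2) ^ 2 * ε ^ (m - 2) * r ^ 2 / (ε ^ 2 + r ^ 2) ^ m) <
      m * ((m : ℝ) - 2) * ∫ r in (0 : ℝ)..ρ, r ^ (m - 1) * (ε ^ m / (ε ^ 2 + r ^ 2) ^ m) := by
  have hm2 : (0 : ℝ) < m - 2 := by
    have : (3 : ℝ) ≤ m := by exact_mod_cast hm
    linarith
  have hftc : ∫ r in (0 : ℝ)..ρ,
      (m * ε ^ 2 * r ^ (m - 1) - ((m : ℝ) - 2) * r ^ (m + 1)) / (ε ^ 2 + r ^ 2) ^ m =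
        ρ ^ m / (ε ^ 2 + ρ ^ 2) ^ (m - 1) := by
    rw [intervalIntegral.integral_eq_sub_of_hasDerivAt
      (fun r _ => hasDerivAt_pow_div_add_sq_pow_pred (by omega) (by positivity) r)
      (Continuous.intervalIntegrable (by fun_prop (disch := intros; positivity)) _ _)]
    simp [zero_pow (show m ≠ 0 by omega)]
  have hsplit :
      m * ((m : ℝ) - 2) * (∫ r in (0 : ℝ)..ρ, r ^ (m - 1) * (ε ^ m / (ε ^ 2 + r ^ 2) ^ m)) -
        ∫ r in (0 : ℝ)..ρ,
          r ^ (m - 1) * (((m : ℝ) - 2) ^ 2 * ε ^ (m - 2) * r ^ 2 / (ε ^ 2 + r ^ 2) ^ m) =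
      ((m : ℝ) - 2) * ε ^ (m - 2) * ∫ r in (0 : ℝ)..ρ,
        (m * ε ^ 2 * r ^ (m - 1) - ((m : ℝ) - 2) * r ^ (m + 1)) / (ε ^ 2 + r ^ 2) ^ m := by
    have hεm : ε ^ m = ε ^ (m - 2) * ε ^ 2 := by rw [← pow_add, Nat.sub_add_cancel (by omega)]
    have hrm : ∀ r : ℝ, r ^ (m + 1) = r ^ (m - 1) * r ^ 2 := fun r => by
      rw [← pow_add]; congr 1; omega
    rw [← intervalIntegral.integral_const_mul, ← intervalIntegral.integral_const_mul,
      ← intervalIntegral.integral_sub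
        (Continuous.intervalIntegrable (by fun_prop (disch := intros; positivity)) _ _)
        (Continuous.intervalIntegrable (by fun_prop (disch := intros; positivity)) _ _)]
    congr 1 with r
    rw [hεm, hrm]
    ring
  have hpos : 0 < ((m : ℝ) - 2) * ε ^ (m - 2) * (ρ ^ m / (ε ^ 2 + ρ ^ 2) ^ (m - 1)) := by positivity
  rw [hftc] at hsplit
  linarith

section TalentiBubble

variable {E : Type*} [NormedAddCommGroup E]

noncomputable def talentiBubble (m : ℕ) (ε : ℝ) (x : E) : ℝ :=
  (ε / (ε ^ 2 + ‖x‖ ^ 2)) ^ (((m : ℝ) - 2) / 2)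

theorem norm_fderiv_comp_norm_sq [InnerProductSpace ℝ E] {g : ℝ → ℝ} {g' : ℝ} {x : E}
    (hg : HasDerivAt g g' (‖x‖ ^ 2)) :
    ‖fderiv ℝ (fun y => g (‖y‖ ^ 2)) x‖ = |g'| * (2 * ‖x‖) := by
  have h : HasFDerivAt (fun y => g (‖y‖ ^ 2)) (g' • 2 • innerSL ℝ x) x :=
    hg.comp_hasFDerivAt x (hasStrictFDerivAt_norm_sq x).hasFDerivAt
  rw [h.fderiv, norm_smul, ← Nat.cast_smul_eq_nsmul ℝ, norm_smul, innerSL_apply_norm]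
  simp

theorem hasDerivAt_div_add_rpow (α : ℝ) {a b s : ℝ} (ha : 0 < a) (hs : 0 < b + s) :
    HasDerivAt (fun s => (a / (b + s)) ^ α) (-α * (a / (b + s)) ^ α / (b + s)) s := by
  have hdiv : HasDerivAt (fun s => a / (b + s)) (-a / (b + s) ^ 2) s := by
    refine ((hasDerivAt_const s a).div ((hasDerivAt_id s).const_add b) hs.ne').congr_deriv ?_
    simp
  have hpos : 0 < a / (b + s) := div_pos ha hs
  refine ((Real.hasDerivAt_rpow_const (Or.inl hpos.ne')).comp s hdiv).congr_deriv ?_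
  rw [Real.rpow_sub hpos, Real.rpow_one]
  field_simp

theorem talentiBubble_rpow {m : ℕ} (hm : m ≠ 2) {ε : ℝ} (hε : 0 ≤ ε) (x : E) :
    talentiBubble m ε x ^ (2 * m / ((m : ℝ) - 2)) = ε ^ m / (ε ^ 2 + ‖x‖ ^ 2) ^ m := by
  have hm' : (m : ℝ) - 2 ≠ 0 := sub_ne_zero.2 (by exact_mod_cast hm)
  rw [talentiBubble, ← Real.rpow_mul (by positivity),
    show ((m : ℝ) - 2) / 2 * (2 * m / ((m : ℝ) - 2)) = m by field_simp, Real.rpow_natCast, div_pow]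

theorem norm_fderiv_talentiBubble_sq [InnerProductSpace ℝ E] {m : ℕ} (hm : 2 ≤ m) {ε : ℝ}
    (hε : 0 < ε) (x : E) :
    ‖fderiv ℝ (talentiBubble m ε) x‖ ^ 2 =
      ((m : ℝ) - 2) ^ 2 * ε ^ (m - 2) * ‖x‖ ^ 2 / (ε ^ 2 + ‖x‖ ^ 2) ^ m := by
  have hD : 0 < ε ^ 2 + ‖x‖ ^ 2 := by positivity
  have hsq : ((ε / (ε ^ 2 + ‖x‖ ^ 2)) ^ (((m : ℝ) - 2) / 2)) ^ 2 =
      (ε / (ε ^ 2 + ‖x‖ ^ 2)) ^ (m - 2) := by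
    rw [← Real.rpow_natCast _ 2, ← Real.rpow_mul (by positivity), ← Real.rpow_natCast _ (m - 2),
      Nat.cast_sub hm]
    congr 1
    push_cast
    ring
  unfold talentiBubble
  rw [norm_fderiv_comp_norm_sq (hasDerivAt_div_add_rpow _ hε hD), mul_pow,
    sq_abs, div_pow, mul_pow, hsq]
  obtain ⟨k, rfl⟩ : ∃ k, m = k + 2 := ⟨m - 2, by omega⟩
  simp only [Nat.add_sub_cancel, div_pow]
  push_cast
  field_simp
  ring

end TalentiBubble

/-- Strict Dirichlet energy bound on balls for the Aubin–Talenti bubble: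
`∫_{B(ρ)} |∇u_ε|² dx < m(m−2) ∫_{B(ρ)} u_ε^p dx` with `p = 2m/(m−2)`. -/
theorem stmt_13 (m : ℕ) (hm : 3 ≤ m) (ε : ℝ) (hε : 0 < ε) (ρ : ℝ) (hρ : 0 < ρ) (p : ℝ)
    (hp : p = 2 * m / ((m : ℝ) - 2))
    (u : EuclideanSpace ℝ (Fin m) → ℝ)
    (hu : ∀ x, u x = (ε / (ε ^ 2 + ‖x‖ ^ 2)) ^ (((m : ℝ) - 2) / 2)) :
    (∫ x in Metric.ball (0 : EuclideanSpace ℝ (Fin m)) ρ, ‖fderiv ℝ u x‖ ^ 2) <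
      (m : ℝ) * ((m : ℝ) - 2) *
        ∫ x in Metric.ball (0 : EuclideanSpace ℝ (Fin m)) ρ, u x ^ p := by
  obtain rfl : u = talentiBubble m ε := funext hu
  have hdim : Module.finrank ℝ (EuclideanSpace ℝ (Fin m)) = m := finrank_euclideanSpace_fin
  have : Nontrivial (EuclideanSpace ℝ (Fin m)) :=
    Module.nontrivial_of_finrank_pos (by rw [hdim]; omega)
  simp only [hp, norm_fderiv_talentiBubble_sq (by omega : 2 ≤ m) hε,
    talentiBubble_rpow (by omega : m ≠ 2) hε.le]
  rw [setIntegral_ball_fun_norm_addHaar volume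
      (fun r => ((m : ℝ) - 2) ^ 2 * ε ^ (m - 2) * r ^ 2 / (ε ^ 2 + r ^ 2) ^ m) hρ.le,
    setIntegral_ball_fun_norm_addHaar volume (fun r => ε ^ m / (ε ^ 2 + r ^ 2) ^ m) hρ.le, hdim]
  have hV : 0 < volume.real (ball (0 : EuclideanSpace ℝ (Fin m)) 1) :=
    ENNReal.toReal_pos (measure_ball_pos volume _ one_pos).ne' measure_ball_lt_top.ne
  have hmV : (0 : ℝ) < m * volume.real (ball (0 : EuclideanSpace ℝ (Fin m)) 1) := by positivity
  simp only [smul_eq_mul, nsmul_eq_mul]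
  linarith [mul_lt_mul_of_pos_left (integral_radial_bubble_energy_lt hm hε hρ) hmV]
end

section
/- Let m ≥ 3, ε > 0, 0 < ρ < R, p = 2m/(m−2), and u_ε(x) = (ε/(ε²+|x|²))^{(m−2)/2} on ℝ^m. Then ∫_{B(R)\B(ρ)} |∇u_ε|² dx = m(m−2) ∫_{B(R)\B(ρ)} u_ε^p dx + (2−m) ω_{m−1} ε^{m−2} [ R^m/(ε²+R²)^{m−1} − ρ^m/(ε²+ρ²)^{m−1} ], where ω_{m−1} is the surface measure of S^{m−1}. -/
open MeasureTheory

/-- The surface measure `ω_{m−1}` of the unit sphere `S^{m−1} ⊂ ℝ^m`,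
expressed as `m` times the volume of the unit ball. -/
noncomputable def sphereArea (m : ℕ) : ℝ :=
  (m : ℝ) * (volume (Metric.ball (0 : EuclideanSpace ℝ (Fin m)) 1)).toReal

/-!
Write `m = k + 2`, so that `u_ε = (ε / (ε² + |x|²))^(k/2)` and
`u_ε^p = (ε / (ε² + |x|²))^(k+2)`. Both integrands are radial, and in polar coordinates the
identity reduces to the pointwise relation
`r^(k+1) |u_ε'(r)|² = (k+2) k r^(k+1) u_ε(r)^p - k ε^k G'(r)`, `G(r) = r^(k+2) / (ε² + r²)^(k+1)`,
which is the integration by parts against `Δu_ε = -m(m-2) u_ε^(p-1)` made explicit.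
-/

open Metric Set

theorem integral_annulus_fun_norm {E : Type*} [NormedAddCommGroup E] [NormedSpace ℝ E]
    [Nontrivial E] [MeasurableSpace E] [BorelSpace E] [FiniteDimensional ℝ E] (μ : Measure E)
    [μ.IsAddHaarMeasure] {ρ R : ℝ} (hρ : 0 < ρ) (hρR : ρ ≤ R) (f : ℝ → ℝ) :
    ∫ x in ball 0 R \ ball 0 ρ, f ‖x‖ ∂μ =
      Module.finrank ℝ E * μ.real (ball 0 1) *
        ∫ r in ρ..R, r ^ (Module.finrank ℝ E - 1) * f r := by
  have hpre : ball (0 : E) R \ ball 0 ρ = (‖·‖) ⁻¹' Ico ρ R := by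
    ext x
    simp only [mem_sdiff, mem_ball_zero_iff, not_lt, mem_preimage, mem_Ico]
    tauto
  have hIco : Ico ρ R ∩ Ioi 0 = Ico ρ R := inter_eq_left.2 fun r hr => hρ.trans_le hr.1
  rw [← integral_indicator (measurableSet_ball.diff measurableSet_ball), hpre]
  have hind : ∀ x : E,
      ((‖·‖) ⁻¹' Ico ρ R).indicator (fun x => f ‖x‖) x = (Ico ρ R).indicator f ‖x‖ :=
    fun _ => indicator_comp_right _
  simp only [hind]
  rw [integral_fun_norm_addHaar μ ((Ico ρ R).indicator f), nsmul_eq_mul, smul_eq_mul, mul_assoc]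
  simp only [smul_eq_mul,
    ← indicator_mul_right _ (fun r : ℝ => r ^ (Module.finrank ℝ E - 1))]
  rw [integral_indicator measurableSet_Ico, Measure.restrict_restrict measurableSet_Ico, hIco,
    integral_Ico_eq_integral_Ioc, ← intervalIntegral.integral_of_le hρR]

section Bubble

variable {ε : ℝ}

section InnerProductSpace

variable {E : Type*} [NormedAddCommGroup E] [InnerProductSpace ℝ E]

theorem hasFDerivAt_bubble (a : ℝ) (hε : 0 < ε) (x : E) :
    HasFDerivAt (fun y : E => (ε / (ε ^ 2 + ‖y‖ ^ 2)) ^ a)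
      ((-2 * a * ε ^ a * (ε ^ 2 + ‖x‖ ^ 2) ^ (-a - 1)) • innerSL ℝ x) x := by
  have hw : ∀ y : E, 0 < ε ^ 2 + ‖y‖ ^ 2 := fun y => by positivity
  have hsplit : (fun y : E => (ε / (ε ^ 2 + ‖y‖ ^ 2)) ^ a) =
      fun y => ε ^ a * (ε ^ 2 + ‖y‖ ^ 2) ^ (-a) := by
    funext y
    rw [Real.div_rpow hε.le (hw y).le, Real.rpow_neg (hw y).le, div_eq_mul_inv]
  have hsq : HasFDerivAt (fun y : E => ε ^ 2 + ‖y‖ ^ 2) ((2 : ℝ) • innerSL ℝ x) x := by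
    simpa [two_smul] using (hasStrictFDerivAt_norm_sq x).hasFDerivAt.const_add (ε ^ 2)
  rw [hsplit]
  refine ((hsq.rpow_const (p := -a) (Or.inl (hw x).ne')).const_mul (ε ^ a)).congr_fderiv ?_
  rw [smul_smul, smul_smul]
  ring_nf

theorem norm_fderiv_bubble_sq (k : ℕ) (hε : 0 < ε) (x : E) :
    ‖fderiv ℝ (fun y : E => (ε / (ε ^ 2 + ‖y‖ ^ 2)) ^ ((k : ℝ) / 2)) x‖ ^ 2 =
      k ^ 2 * ε ^ k * ‖x‖ ^ 2 / (ε ^ 2 + ‖x‖ ^ 2) ^ (k + 2) := by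
  have hw : 0 < ε ^ 2 + ‖x‖ ^ 2 := by positivity
  have hε2 : (ε ^ ((k : ℝ) / 2)) ^ 2 = ε ^ k := by
    rw [← Real.rpow_mul_natCast hε.le, ← Real.rpow_natCast]
    push_cast; ring_nf
  have hw2 : ((ε ^ 2 + ‖x‖ ^ 2) ^ (-((k : ℝ) / 2) - 1)) ^ 2 =
      ((ε ^ 2 + ‖x‖ ^ 2) ^ (k + 2))⁻¹ := by
    rw [← Real.rpow_mul_natCast hw.le, ← Real.rpow_natCast (ε ^ 2 + ‖x‖ ^ 2) (k + 2),
      ← Real.rpow_neg hw.le]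
    push_cast; ring_nf
  rw [(hasFDerivAt_bubble _ hε x).fderiv, norm_smul, innerSL_apply_norm, Real.norm_eq_abs,
    mul_pow, sq_abs, mul_pow, mul_pow, mul_pow, hε2, hw2]
  ring

end InnerProductSpace

theorem hasDerivAt_pow_div_sq_add_sq_pow (k : ℕ) (hε : ε ≠ 0) (r : ℝ) :
    HasDerivAt (fun s => s ^ (k + 2) / (ε ^ 2 + s ^ 2) ^ (k + 1))
      (r ^ (k + 1) * ((k + 2) * ε ^ 2 - k * r ^ 2) / (ε ^ 2 + r ^ 2) ^ (k + 2)) r := by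
  have hw : ε ^ 2 + r ^ 2 ≠ 0 := by positivity
  refine ((hasDerivAt_pow (k + 2) r).div (((hasDerivAt_pow 2 r).const_add (ε ^ 2)).pow (k + 1))
    (pow_ne_zero _ hw)).congr_deriv ?_
  simp only [Nat.add_sub_cancel, Pi.pow_apply]
  field_simp
  push_cast
  ring

theorem integral_bubble_energy_radial (k : ℕ) (hε : ε ≠ 0) (ρ R : ℝ) :
    ∫ r in ρ..R, r ^ (k + 1) * (k ^ 2 * ε ^ k * r ^ 2 / (ε ^ 2 + r ^ 2) ^ (k + 2)) =
      (k + 2) * k * (∫ r in ρ..R, r ^ (k + 1) * (ε ^ (k + 2) / (ε ^ 2 + r ^ 2) ^ (k + 2))) -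
        k * ε ^ k * (R ^ (k + 2) / (ε ^ 2 + R ^ 2) ^ (k + 1) -
          ρ ^ (k + 2) / (ε ^ 2 + ρ ^ 2) ^ (k + 1)) := by
  have hw : ∀ r : ℝ, ε ^ 2 + r ^ 2 ≠ 0 := fun r => by positivity
  set G' : ℝ → ℝ := fun r =>
    r ^ (k + 1) * ((k + 2) * ε ^ 2 - k * r ^ 2) / (ε ^ 2 + r ^ 2) ^ (k + 2)
  have hG' : Continuous G' := by fun_prop (disch := exact fun r => pow_ne_zero _ (hw r))
  have hsplit : ∀ r : ℝ, r ^ (k + 1) * (k ^ 2 * ε ^ k * r ^ 2 / (ε ^ 2 + r ^ 2) ^ (k + 2)) =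
      (k + 2) * k * (r ^ (k + 1) * (ε ^ (k + 2) / (ε ^ 2 + r ^ 2) ^ (k + 2))) -
        k * ε ^ k * G' r := by
    intro r
    simp only [G']
    field_simp
    ring
  have hcont :
      Continuous fun r : ℝ => r ^ (k + 1) * (ε ^ (k + 2) / (ε ^ 2 + r ^ 2) ^ (k + 2)) := by
    fun_prop (disch := exact fun r => pow_ne_zero _ (hw r))
  simp_rw [hsplit]
  rw [intervalIntegral.integral_sub ((hcont.const_mul _).intervalIntegrable _ _)
      ((hG'.const_mul _).intervalIntegrable _ _), intervalIntegral.integral_const_mul,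
    intervalIntegral.integral_const_mul,
    intervalIntegral.integral_eq_sub_of_hasDerivAt
      (fun r _ => hasDerivAt_pow_div_sq_add_sq_pow k hε r) (hG'.intervalIntegrable _ _)]

end Bubble

/-- Annulus energy identity for the Aubin–Talenti bubble:
`∫_{B(R)∖B(ρ)} |∇u_ε|² = m(m−2) ∫_{B(R)∖B(ρ)} u_ε^p
  + (2−m) ω_{m−1} ε^{m−2} [R^m/(ε²+R²)^{m−1} − ρ^m/(ε²+ρ²)^{m−1}]`. -/
theorem stmt_14 (m : ℕ) (hm : 3 ≤ m) (ε : ℝ) (hε : 0 < ε) (ρ R : ℝ)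
    (hρ : 0 < ρ) (hρR : ρ < R) (p : ℝ) (hp : p = 2 * m / ((m : ℝ) - 2))
    (u : EuclideanSpace ℝ (Fin m) → ℝ)
    (hu : ∀ x, u x = (ε / (ε ^ 2 + ‖x‖ ^ 2)) ^ (((m : ℝ) - 2) / 2)) :
    (∫ x in Metric.ball (0 : EuclideanSpace ℝ (Fin m)) R \
        Metric.ball (0 : EuclideanSpace ℝ (Fin m)) ρ, ‖fderiv ℝ u x‖ ^ 2) =
      (m : ℝ) * ((m : ℝ) - 2) *
        (∫ x in Metric.ball (0 : EuclideanSpace ℝ (Fin m)) R \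
          Metric.ball (0 : EuclideanSpace ℝ (Fin m)) ρ, u x ^ p) +
      (2 - (m : ℝ)) * sphereArea m * ε ^ (m - 2) *
        (R ^ m / (ε ^ 2 + R ^ 2) ^ (m - 1) - ρ ^ m / (ε ^ 2 + ρ ^ 2) ^ (m - 1)) := by
  obtain ⟨k, rfl⟩ : ∃ k, m = k + 2 := ⟨m - 2, by omega⟩
  have hk : (k : ℝ) ≠ 0 := Nat.cast_ne_zero.2 (by omega)
  have hu' : u = fun x => (ε / (ε ^ 2 + ‖x‖ ^ 2)) ^ ((k : ℝ) / 2) := by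
    funext x
    rw [hu]
    push_cast
    ring_nf
  have hgrad (x : EuclideanSpace ℝ (Fin (k + 2))) :
      ‖fderiv ℝ u x‖ ^ 2 = k ^ 2 * ε ^ k * ‖x‖ ^ 2 / (ε ^ 2 + ‖x‖ ^ 2) ^ (k + 2) := by
    rw [hu']
    exact norm_fderiv_bubble_sq k hε x
  have hcrit (x : EuclideanSpace ℝ (Fin (k + 2))) :
      u x ^ p = ε ^ (k + 2) / (ε ^ 2 + ‖x‖ ^ 2) ^ (k + 2) := by
    have hexp : (k : ℝ) / 2 * p = ((k + 2 : ℕ) : ℝ) := by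
      rw [hp, Nat.cast_add, Nat.cast_two, add_sub_cancel_right]
      field_simp
    rw [hu', ← Real.rpow_mul (by positivity), hexp, Real.rpow_natCast, div_pow]
  have hA : MeasurableSet (ball (0 : EuclideanSpace ℝ (Fin (k + 2))) R \ ball 0 ρ) :=
    measurableSet_ball.diff measurableSet_ball
  rw [setIntegral_congr_fun hA fun x _ => hgrad x, setIntegral_congr_fun hA fun x _ => hcrit x,
    integral_annulus_fun_norm volume hρ hρR.le
      (fun r => k ^ 2 * ε ^ k * r ^ 2 / (ε ^ 2 + r ^ 2) ^ (k + 2)),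
    integral_annulus_fun_norm volume hρ hρR.le
      (fun r => ε ^ (k + 2) / (ε ^ 2 + r ^ 2) ^ (k + 2)),
    finrank_euclideanSpace_fin, show k + 2 - 1 = k + 1 from rfl, Nat.add_sub_cancel,
    integral_bubble_energy_radial k hε.ne', sphereArea, measureReal_def]
  push_cast
  ring
end
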